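/- Let r = (r_1,…,r_n) be a non-deficit Groves mechanism, π a permutation of {1,…,n}, and r^π the priority-based transform defined recursively by: for k = 1,…,n, with i = π^{-1}(k), r^π_i(θ_{-i}) := inf_{θ'_i ∈ Θ_i} { VCG(θ'_i,θ_{-i}) − Σ_{j : π(j) > k} r_j(θ'_{-j}) − Σ_{j : π(j) < k} r^π_j(θ'_{-j}) }, where all these infima are assumed to exist in ℝ. Then r^π is a non-deficit Groves mechanism that is individually undominated among non-deficit Groves mechanisms. -/

import Mathlib

/-!
Taking `θ'_i = θ_i` in the infimum defining `rπ_i` says that the hybrid mechanism which pays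
`rπ` to the agents of priority at most `π i` and `r` to all others is non-deficit. For the empty
set of agents this is the non-deficit property of `r`, and every initial segment of the priority
order is either empty or of this form, so all these hybrids are non-deficit. The full segment
gives the non-deficit property of `rπ`; the segment strictly before `i`, evaluated at
`(θ'_i, θ_{-i})`, gives `r_i ≤ rπ_i`. Finally, if a non-deficit Groves mechanism `r'` dominated
`rπ` strictly at `(i, θ)`, some `θ'_i` would push the expression in the infimum below
`r'_i(θ_{-i})`; as `r ≤ rπ ≤ r'` for all other agents, `r'` would then run a deficit at
`(θ'_i, θ_{-i})`.
-/

noncomputable def VCGi {n : ℕ} {D : Type} [Fintype D] [Nonempty D]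
    {Θ : Fin n → Type} (v : ∀ i, D → Θ i → ℝ) (f : (∀ i, Θ i) → D)
    (i : Fin n) (θ : ∀ j, Θ j) : ℝ :=
  (Finset.univ.sup' Finset.univ_nonempty fun d =>
      ∑ j ∈ Finset.univ.erase i, v j d (θ j)) -
    ∑ j ∈ Finset.univ.erase i, v j (f θ) (θ j)

noncomputable def VCGtot {n : ℕ} {D : Type} [Fintype D] [Nonempty D]
    {Θ : Fin n → Type} (v : ∀ i, D → Θ i → ℝ) (f : (∀ i, Θ i) → D)
    (θ : ∀ j, Θ j) : ℝ :=
  ∑ i, VCGi v f i θ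

open Finset Function

section PriorityOrder

variable {ι κ : Type*} [Fintype ι] [LinearOrder κ] {π : ι → κ}

theorem Finset.eq_empty_or_eq_filter_le_of_forall_le_mem {s : Finset ι}
    (hs : ∀ j ∈ s, ∀ k, π k ≤ π j → k ∈ s) :
    s = ∅ ∨ ∃ m, s = univ.filter (fun j => π j ≤ π m) := by
  rcases s.eq_empty_or_nonempty with rfl | hne
  · exact Or.inl rfl
  obtain ⟨m, hm, hmax⟩ := s.exists_max_image π hne
  refine Or.inr ⟨m, ext fun j => ?_⟩
  simp only [mem_filter, mem_univ, true_and]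
  exact ⟨hmax j, hs m hm j⟩

variable [DecidableEq ι]

theorem Finset.filter_le_eq_insert_filter_lt (hπ : Injective π) (i : ι) :
    univ.filter (fun j => π j ≤ π i) = insert i (univ.filter (fun j => π j < π i)) := by
  ext j
  simp [le_iff_lt_or_eq, hπ.eq_iff, or_comm]

theorem Finset.compl_filter_le (i : ι) :
    (univ.filter (fun j => π j ≤ π i))ᶜ = univ.filter (fun j => π i < π j) := by
  ext j
  simp

theorem Finset.compl_filter_lt (hπ : Injective π) (i : ι) :
    (univ.filter (fun j => π j < π i))ᶜ = insert i (univ.filter (fun j => π i < π j)) := by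
  ext j
  simp [le_iff_lt_or_eq, hπ.eq_iff, eq_comm, or_comm]

theorem Finset.sum_piecewise_apply {α : Type*} (s : Finset ι) (f g : ι → α → ℝ) (a : α) :
    ∑ j, s.piecewise f g j a = ∑ j ∈ s, f j a + ∑ j ∈ sᶜ, g j a := by
  rw [← sum_add_sum_compl s]
  congr 1 <;> refine sum_congr rfl fun j hj => ?_
  · rw [piecewise_eq_of_mem _ _ _ hj]
  · rw [piecewise_eq_of_notMem _ _ _ (mem_compl.1 hj)]

end PriorityOrder

section Mechanism

variable {ι κ : Type*} [DecidableEq ι] {Θ : ι → Type*}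

def IsGroves (r : ι → (∀ j, Θ j) → ℝ) : Prop :=
  ∀ (i : ι) (θ θ' : ∀ j, Θ j), (∀ j, j ≠ i → θ j = θ' j) → r i θ = r i θ'

theorem IsGroves.apply_update {r : ι → (∀ j, Θ j) → ℝ} (hr : IsGroves r) (i : ι)
    (θ : ∀ j, Θ j) (x : Θ i) : r i (update θ i x) = r i θ :=
  hr i _ _ fun _ hj => update_of_ne hj x θ

variable [Fintype ι] [LinearOrder κ]

def IsNonDeficit (V : (∀ j, Θ j) → ℝ) (r : ι → (∀ j, Θ j) → ℝ) : Prop :=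
  ∀ θ, ∑ i, r i θ ≤ V θ

def IsPriorityTransform (V : (∀ j, Θ j) → ℝ) (π : ι → κ) (r rπ : ι → (∀ j, Θ j) → ℝ) :
    Prop :=
  ∀ i θ, IsGLB {y : ℝ | ∃ x : Θ i, y = V (update θ i x) -
      ∑ j ∈ univ.filter (fun j => π i < π j), r j (update θ i x) -
      ∑ j ∈ univ.filter (fun j => π j < π i), rπ j (update θ i x)} (rπ i θ)

variable {V : (∀ j, Θ j) → ℝ} {π : ι → κ} {r rπ : ι → (∀ j, Θ j) → ℝ}

namespace IsPriorityTransform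

theorem isNonDeficit_piecewise_filter_le (h : IsPriorityTransform V π r rπ)
    (hπ : Injective π) (i : ι) :
    IsNonDeficit V ((univ.filter (fun j => π j ≤ π i)).piecewise rπ r) := by
  intro θ
  have hle := (h i θ).1 ⟨θ i, by rw [update_eq_self]⟩
  rw [sum_piecewise_apply, compl_filter_le, filter_le_eq_insert_filter_lt hπ,
    sum_insert (by simp)]
  linarith

theorem isNonDeficit_piecewise (h : IsPriorityTransform V π r rπ) (hπ : Injective π)
    (hr : IsNonDeficit V r) {s : Finset ι} (hs : ∀ j ∈ s, ∀ k, π k ≤ π j → k ∈ s) :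
    IsNonDeficit V (s.piecewise rπ r) := by
  obtain rfl | ⟨m, rfl⟩ := eq_empty_or_eq_filter_le_of_forall_le_mem hs
  · simpa using hr
  · exact h.isNonDeficit_piecewise_filter_le hπ m

theorem isNonDeficit (h : IsPriorityTransform V π r rπ) (hπ : Injective π)
    (hr : IsNonDeficit V r) : IsNonDeficit V rπ := by
  simpa using h.isNonDeficit_piecewise hπ hr (s := univ) (by simp)

theorem apply_le (h : IsPriorityTransform V π r rπ) (hπ : Injective π) (hr : IsNonDeficit V r)
    (hrG : IsGroves r) (i : ι) (θ : ∀ j, Θ j) : r i θ ≤ rπ i θ := by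
  refine (h i θ).2 ?_
  rintro _ ⟨x, rfl⟩
  have hnd := h.isNonDeficit_piecewise hπ hr (s := univ.filter (fun j => π j < π i))
    (fun j hj k hk => by simp only [mem_filter, mem_univ, true_and] at hj ⊢; exact hk.trans_lt hj)
    (update θ i x)
  rw [sum_piecewise_apply, compl_filter_lt hπ, sum_insert (by simp), hrG.apply_update] at hnd
  linarith

theorem not_exists_dominating (h : IsPriorityTransform V π r rπ) (hπ : Injective π)
    (hr : IsNonDeficit V r) (hrG : IsGroves r) :
    ¬ ∃ r' : ι → (∀ j, Θ j) → ℝ, IsGroves r' ∧ IsNonDeficit V r' ∧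
      (∀ i θ, rπ i θ ≤ r' i θ) ∧ ∃ i θ, rπ i θ < r' i θ := by
  rintro ⟨r', hr'G, hr', hle, i, θ, hlt⟩
  obtain ⟨_, ⟨x, rfl⟩, -, hx⟩ := (h i θ).exists_between hlt
  have hnd := hr' (update θ i x)
  rw [← sum_add_sum_compl (univ.filter (fun j => π j < π i)), compl_filter_lt hπ,
    sum_insert (by simp), hr'G.apply_update] at hnd
  have hbefore := sum_le_sum fun j (_ : j ∈ univ.filter (fun j => π j < π i)) =>
    hle j (update θ i x)
  have hafter := sum_le_sum fun j (_ : j ∈ univ.filter (fun j => π i < π j)) =>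
    (h.apply_le hπ hr hrG j (update θ i x)).trans (hle j _)
  linarith

end IsPriorityTransform

end Mechanism

theorem stmt_8_general {n : ℕ} {D : Type} [Fintype D] [Nonempty D]
    {Θ : Fin n → Type}
    (v : ∀ i, D → Θ i → ℝ) (f : (∀ i, Θ i) → D)
    (r : ∀ _ : Fin n, (∀ j, Θ j) → ℝ)
    (hind : ∀ (i : Fin n) (θ θ' : ∀ j, Θ j),
      (∀ j, j ≠ i → θ j = θ' j) → r i θ = r i θ')
    (hnd : ∀ θ : ∀ j, Θ j, ∑ i, r i θ ≤ VCGtot v f θ)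
    (π : Equiv.Perm (Fin n))
    (rπ : ∀ _ : Fin n, (∀ j, Θ j) → ℝ)
    (hrπ : ∀ (i : Fin n) (θ : ∀ j, Θ j),
      IsGLB {y : ℝ | ∃ x : Θ i, y = VCGtot v f (Function.update θ i x) -
          ∑ j ∈ Finset.univ.filter (fun j => π i < π j), r j (Function.update θ i x) -
          ∑ j ∈ Finset.univ.filter (fun j => π j < π i), rπ j (Function.update θ i x)}
        (rπ i θ)) :
    (∀ θ : ∀ j, Θ j, ∑ i, rπ i θ ≤ VCGtot v f θ) ∧
    ¬ ∃ r' : ∀ _ : Fin n, (∀ j, Θ j) → ℝ,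
      (∀ (i : Fin n) (θ θ' : ∀ j, Θ j),
        (∀ j, j ≠ i → θ j = θ' j) → r' i θ = r' i θ') ∧
      (∀ θ : ∀ j, Θ j, ∑ i, r' i θ ≤ VCGtot v f θ) ∧
      (∀ (i : Fin n) (θ : ∀ j, Θ j), rπ i θ ≤ r' i θ) ∧
      (∃ (i : Fin n) (θ : ∀ j, Θ j), rπ i θ < r' i θ) := by
  have h : IsPriorityTransform (VCGtot v f) π r rπ := hrπ
  exact ⟨h.isNonDeficit π.injective hnd, h.not_exists_dominating π.injective hnd hind⟩

theorem stmt_8 {n : ℕ} (hn : 2 ≤ n) {D : Type} [Fintype D] [Nonempty D]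
    {Θ : Fin n → Type} [∀ i, Nonempty (Θ i)]
    (v : ∀ i, D → Θ i → ℝ) (f : (∀ i, Θ i) → D)
    (hf : ∀ (θ : ∀ j, Θ j) (d : D),
      ∑ i, v i d (θ i) ≤ ∑ i, v i (f θ) (θ i))
    (r : ∀ _ : Fin n, (∀ j, Θ j) → ℝ)
    (hind : ∀ (i : Fin n) (θ θ' : ∀ j, Θ j),
      (∀ j, j ≠ i → θ j = θ' j) → r i θ = r i θ')
    (hnd : ∀ θ : ∀ j, Θ j, ∑ i, r i θ ≤ VCGtot v f θ)
    (π : Equiv.Perm (Fin n))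
    (rπ : ∀ _ : Fin n, (∀ j, Θ j) → ℝ)
    (hindπ : ∀ (i : Fin n) (θ θ' : ∀ j, Θ j),
      (∀ j, j ≠ i → θ j = θ' j) → rπ i θ = rπ i θ')
    (hrπ : ∀ (i : Fin n) (θ : ∀ j, Θ j),
      IsGLB {y : ℝ | ∃ x : Θ i, y = VCGtot v f (Function.update θ i x) -
          ∑ j ∈ Finset.univ.filter (fun j => π i < π j), r j (Function.update θ i x) -
          ∑ j ∈ Finset.univ.filter (fun j => π j < π i), rπ j (Function.update θ i x)}
        (rπ i θ)) :
    (∀ θ : ∀ j, Θ j, ∑ i, rπ i θ ≤ VCGtot v f θ) ∧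
    ¬ ∃ r' : ∀ _ : Fin n, (∀ j, Θ j) → ℝ,
      (∀ (i : Fin n) (θ θ' : ∀ j, Θ j),
        (∀ j, j ≠ i → θ j = θ' j) → r' i θ = r' i θ') ∧
      (∀ θ : ∀ j, Θ j, ∑ i, r' i θ ≤ VCGtot v f θ) ∧
      (∀ (i : Fin n) (θ : ∀ j, Θ j), rπ i θ ≤ r' i θ) ∧
      (∃ (i : Fin n) (θ : ∀ j, Θ j), rπ i θ < r' i θ) :=
  stmt_8_general v f r hind hnd π rπ hrπ
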